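/- arXiv:1103.5323 — 2 statements merged into one kernel-verified Lean document; each statement's English description precedes it below -/
import Mathlib

section
/- Let m ≥ 1 and consider the polynomial ring R = ℂ[T, X_0, …, X_{m−1}, Y_0, …, Y_{m−1}]. Then the sequence of polynomials X_0 Y_0 − T², X_1 Y_1 − T², …, X_{m−1} Y_{m−1} − T² is a regular sequence in R. -/
/-!
Induct on `m`, over an arbitrary commutative base ring `A` and with `T²` replaced by an arbitrary
constant `c ∈ A` (for the theorem, `A = k[T]` and `c = T²`). Moving the variables `x₀, y₀` into the
coefficients turns the first quadric into the constant `x₀ y₀ - c ∈ B = A[x₀][y₀]`, which is a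
nonzerodivisor because its coefficient of `y₀` is `x₀`. Dividing by it leaves the remaining
quadrics, of the same shape, over the base ring `B ⧸ (x₀ y₀ - c)`. The ideal they generate is
proper since all of them vanish at the origin.
-/

open MvPolynomial RingTheory.Sequence
open scoped Pointwise

namespace RingTheory.Sequence

theorem isWeaklyRegular_map_ringEquiv_iff {R S F : Type*} [CommRing R] [CommRing S]
    [EquivLike F R S] [RingEquivClass F R S] (φ : F) (rs : List R) :
    IsWeaklyRegular S (rs.map φ) ↔ IsWeaklyRegular R rs :=
  ((φ : R ≃+ S).isWeaklyRegular_congr (bs := rs.map φ) (List.forall₂_map_right_iff.mpr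
    (List.forall₂_same.mpr fun r _ x => map_mul φ r x))).symm

theorem isWeaklyRegular_cons_of_ker_eq_span_singleton {R S : Type*} [CommRing R] [CommRing S]
    {ψ : R →+* S} (hψ : Function.Surjective ψ) {r : R} (hker : RingHom.ker ψ = Ideal.span {r})
    (hr : IsSMulRegular R r) {rs : List R} (h : IsWeaklyRegular S (rs.map ψ)) :
    IsWeaklyRegular R (r :: rs) := by
  refine .cons hr ?_
  have hspan : r • (⊤ : Submodule R R) = RingHom.ker ψ := by
    rw [hker, ← Submodule.ideal_span_singleton_smul, Ideal.smul_eq_mul, Ideal.mul_top]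
  let e : QuotSMulTop r R ≃+ S :=
    (Submodule.quotEquivOfEq _ _ hspan).toAddEquiv.trans
      (RingHom.quotientKerEquivOfSurjective hψ).toAddEquiv
  refine (e.isWeaklyRegular_congr (List.forall₂_map_right_iff.mpr
    (List.forall₂_same.mpr fun a _ x => ?_))).mpr h
  obtain ⟨y, rfl⟩ := Submodule.Quotient.mk_surjective _ x
  exact map_mul ψ a y

theorem top_ne_ofList_smul_top_of_map_eq_zero {R S : Type*} [CommRing R] [Semiring S]
    [Nontrivial S] (f : R →+* S) {rs : List R} (h : ∀ r ∈ rs, f r = 0) :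
    (⊤ : Submodule R R) ≠ Ideal.ofList rs • ⊤ := by
  rw [Ideal.smul_eq_mul, Ideal.mul_top]
  exact fun htop => RingHom.ker_ne_top f (top_le_iff.mp (htop ▸ Ideal.span_le.mpr h))

end RingTheory.Sequence

theorem Polynomial.isRegular_C_X_mul_X_sub_C {A : Type*} [CommRing A] (c : Polynomial A) :
    IsRegular (Polynomial.C Polynomial.X * Polynomial.X - Polynomial.C c) :=
  isRegular_iff_mem_nonZeroDivisors.mpr <|
    Polynomial.mem_nonzeroDivisors_of_coeff_mem 1 (by simpa using Polynomial.X_mem_nonzeroDivisors)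

def finSuccSumFinSuccEquiv (n : ℕ) :
    Fin (n + 1) ⊕ Fin (n + 1) ≃ Option (Option (Fin n ⊕ Fin n)) where
  toFun := Sum.elim (Fin.cases none fun i => some (some (.inl i)))
    (Fin.cases (some none) fun i => some (some (.inr i)))
  invFun
    | none => .inl 0
    | some none => .inr 0
    | some (some (.inl i)) => .inl i.succ
    | some (some (.inr i)) => .inr i.succ
  left_inv := by rintro (i | i) <;> cases i using Fin.cases <;> rfl
  right_inv := by rintro (_ | _ | i | i) <;> rfl

namespace MvPolynomial

noncomputable def finSuccSumFinSuccEquiv (n : ℕ) (A : Type*) [CommSemiring A] :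
    MvPolynomial (Fin (n + 1) ⊕ Fin (n + 1)) A ≃+*
      MvPolynomial (Fin n ⊕ Fin n) (Polynomial (Polynomial A)) :=
  (renameEquiv A (_root_.finSuccSumFinSuccEquiv n)).toRingEquiv.trans <|
    (optionEquivRight A _).toRingEquiv.trans (optionEquivRight (Polynomial A) _).toRingEquiv

theorem finSuccSumFinSuccEquiv_quadric_zero (n : ℕ) (A : Type*) [CommRing A] (c : A) :
    finSuccSumFinSuccEquiv n A (X (.inl 0) * X (.inr 0) - C c) =
      C (Polynomial.C Polynomial.X * Polynomial.X - Polynomial.C (Polynomial.C c)) := by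
  simp [finSuccSumFinSuccEquiv, _root_.finSuccSumFinSuccEquiv]

theorem finSuccSumFinSuccEquiv_quadric_succ (n : ℕ) (A : Type*) [CommRing A] (c : A)
    (i : Fin n) :
    finSuccSumFinSuccEquiv n A (X (.inl i.succ) * X (.inr i.succ) - C c) =
      X (.inl i) * X (.inr i) - C (Polynomial.C (Polynomial.C c)) := by
  simp [finSuccSumFinSuccEquiv, _root_.finSuccSumFinSuccEquiv]

theorem isWeaklyRegular_C_cons {σ B : Type*} [CommRing B] {q : B} (hq : _root_.IsRegular q)
    {rs : List (MvPolynomial σ B)}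
    (h : IsWeaklyRegular (MvPolynomial σ (B ⧸ Ideal.span {q}))
      (rs.map (map (Ideal.Quotient.mk (Ideal.span {q}))))) :
    IsWeaklyRegular (MvPolynomial σ B) (C q :: rs) := by
  refine isWeaklyRegular_cons_of_ker_eq_span_singleton
    (map_surjective _ Ideal.Quotient.mk_surjective) ?_ (hq.monomial (m := 0)).left h
  rw [ker_map, Ideal.mk_ker, Ideal.map_span, Set.image_singleton]
  rfl

theorem isWeaklyRegular_ofFn_X_inl_mul_X_inr_sub_C (n : ℕ) (A : Type*) [CommRing A] (c : A) :
    IsWeaklyRegular (MvPolynomial (Fin n ⊕ Fin n) A)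
      (List.ofFn fun i : Fin n => X (Sum.inl i) * X (Sum.inr i) - C c) := by
  induction n generalizing A with
  | zero => simp
  | succ n ih =>
    rw [← isWeaklyRegular_map_ringEquiv_iff (finSuccSumFinSuccEquiv n A), List.ofFn_succ,
      List.map_cons, finSuccSumFinSuccEquiv_quadric_zero, List.map_ofFn]
    refine isWeaklyRegular_C_cons (Polynomial.isRegular_C_X_mul_X_sub_C _) ?_
    simp only [List.map_ofFn, Function.comp_def, finSuccSumFinSuccEquiv_quadric_succ]
    simp only [map_sub, map_mul, map_X, map_C]
    exact ih (Polynomial (Polynomial A) ⧸ Ideal.span {_}) _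

theorem isRegular_ofFn_X_some_inl_mul_X_some_inr_sub_X_none_sq (k : Type*) [CommRing k]
    [Nontrivial k] (m : ℕ) :
    IsRegular (MvPolynomial (Option (Fin m ⊕ Fin m)) k)
      (List.ofFn fun i : Fin m =>
        (X (some (Sum.inl i)) * X (some (Sum.inr i)) - X none ^ 2 :
          MvPolynomial (Option (Fin m ⊕ Fin m)) k)) where
  toIsWeaklyRegular := by
    rw [← isWeaklyRegular_map_ringEquiv_iff (optionEquivRight k (Fin m ⊕ Fin m))]
    simp only [List.map_ofFn, Function.comp_def, map_sub, map_mul, map_pow,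
      optionEquivRight_X_some, optionEquivRight_X_none]
    have h := isWeaklyRegular_ofFn_X_inl_mul_X_inr_sub_C m (Polynomial k) (Polynomial.X ^ 2)
    simp only [map_pow] at h
    exact h
  top_ne_smul := top_ne_ofList_smul_top_of_map_eq_zero constantCoeff (by simp [List.mem_ofFn])

end MvPolynomial

theorem dolbeault_quadrics_regular_sequence_general (m : ℕ) :
    RingTheory.Sequence.IsRegular (MvPolynomial (Option (Fin m ⊕ Fin m)) ℂ)
      (List.ofFn fun i : Fin m =>
        (X (some (Sum.inl i)) * X (some (Sum.inr i)) - (X none) ^ 2 :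
          MvPolynomial (Option (Fin m ⊕ Fin m)) ℂ)) :=
  isRegular_ofFn_X_some_inl_mul_X_some_inr_sub_X_none_sq ℂ m

/-- In the polynomial ring `ℂ[T, X_0, …, X_{m−1}, Y_0, …, Y_{m−1}]`, the sequence
`X_0 Y_0 − T², …, X_{m−1} Y_{m−1} − T²` is a regular sequence. -/
theorem dolbeault_quadrics_regular_sequence (m : ℕ) (hm : 1 ≤ m) :
    RingTheory.Sequence.IsRegular (MvPolynomial (Option (Fin m ⊕ Fin m)) ℂ)
      (List.ofFn fun i : Fin m =>
        (X (some (Sum.inl i)) * X (some (Sum.inr i)) - (X none) ^ 2 :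
          MvPolynomial (Option (Fin m ⊕ Fin m)) ℂ)) :=
  dolbeault_quadrics_regular_sequence_general m
end

section
/- Let m ≥ 1 and let H₀ ⊂ ℂ^m × ℂ^m be the set {(x,y) : x_p y_p = 0 for all 0 ≤ p ≤ m−1}. Then H₀ is the union of exactly 2^m distinct maximal linear subspaces, namely the Π̂_A = {(x,y) : x_i = 0 for i ∉ A, y_j = 0 for j ∈ A} for A ⊆ {0,…,m−1}; that is, every linear subspace contained in H₀ is contained in some Π̂_A, and no Π̂_A is contained in Π̂_B for A ≠ B. -/
/-- The coordinate subspace `Π̂_A` of `ℂ^m × ℂ^m` as a submodule. -/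
noncomputable def PiHatSub (m : ℕ) (A : Set (Fin m)) : Submodule ℂ ((Fin m → ℂ) × (Fin m → ℂ)) where
  carrier := {w | (∀ i, i ∉ A → w.1 i = 0) ∧ (∀ j, j ∈ A → w.2 j = 0)}
  add_mem' := by
    intro a b ha hb
    exact ⟨fun i hi => by simp [ha.1 i hi, hb.1 i hi],
      fun j hj => by simp [ha.2 j hj, hb.2 j hj]⟩
  zero_mem' := ⟨fun i _ => rfl, fun j _ => rfl⟩
  smul_mem' := by
    intro c a ha
    exact ⟨fun i hi => by simp [ha.1 i hi], fun j hj => by simp [ha.2 j hj]⟩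

/-- The locus `H₀ = {x_p y_p = 0 ∀p}` is the union of the `2^m` distinct maximal
linear subspaces `Π̂_A`: it equals `⋃_A Π̂_A`, every linear subspace contained in
`H₀` is contained in some `Π̂_A`, and no `Π̂_A` is contained in another. -/
theorem lagrangian_cycle_components (m : ℕ) (hm : 1 ≤ m) :
    ({w : (Fin m → ℂ) × (Fin m → ℂ) | ∀ p : Fin m, w.1 p * w.2 p = 0} =
      ⋃ A : Set (Fin m), (PiHatSub m A : Set ((Fin m → ℂ) × (Fin m → ℂ)))) ∧
    (∀ W : Submodule ℂ ((Fin m → ℂ) × (Fin m → ℂ)),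
      (W : Set ((Fin m → ℂ) × (Fin m → ℂ))) ⊆
          {w | ∀ p : Fin m, w.1 p * w.2 p = 0} →
        ∃ A : Set (Fin m), W ≤ PiHatSub m A) ∧
    (∀ A B : Set (Fin m), A ≠ B → ¬ PiHatSub m A ≤ PiHatSub m B) := by
  refine ⟨?_, ?_, ?_⟩
  · ext w
    simp only [Set.mem_setOf_eq, Set.mem_iUnion, SetLike.mem_coe]
    constructor
    · intro h
      refine ⟨{p | w.2 p = 0}, ?_, ?_⟩
      · intro i hi
        have := h i
        rcases mul_eq_zero.mp this with h1 | h2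
        · exact h1
        · exact absurd h2 hi
      · intro j hj
        exact hj
    · rintro ⟨A, h1, h2⟩ p
      by_cases hp : p ∈ A
      · simp [h2 p hp]
      · simp [h1 p hp]
  · intro W hW
    refine ⟨{p | ∃ u ∈ W, u.1 p ≠ 0}, ?_⟩
    intro w hw
    refine ⟨fun i hi => by_contra fun h => hi ⟨w, hw, h⟩, ?_⟩
    rintro p ⟨u, hu, hup⟩
    by_contra hy
    -- u.2 p = 0, w.1 p = 0
    have hu2 : u.2 p = 0 := by
      rcases mul_eq_zero.mp (hW hu p) with h | h
      · exact absurd h hup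
      · exact h
    have hw1 : w.1 p = 0 := by
      rcases mul_eq_zero.mp (hW hw p) with h | h
      · exact h
      · exact absurd h hy
    have hsum := hW (W.add_mem hu hw) p
    simp only [Prod.fst_add, Prod.snd_add, Pi.add_apply, hu2, hw1, zero_add, add_zero] at hsum
    rcases mul_eq_zero.mp hsum with h | h
    · exact hup h
    · exact hy h
  · intro A B hAB hle
    have : ∃ p, ¬ (p ∈ A ↔ p ∈ B) := by
      by_contra h
      push_neg at h
      exact hAB (Set.ext fun p => h p)
    obtain ⟨p, hp⟩ := this
    by_cases hpA : p ∈ A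
    · have hpB : p ∉ B := fun h => hp ⟨fun _ => h, fun _ => hpA⟩
      have hmem : (Pi.single p (1:ℂ), (0 : Fin m → ℂ)) ∈ PiHatSub m A := by
        refine ⟨fun i hi => ?_, fun j _ => rfl⟩
        exact Pi.single_eq_of_ne (by rintro rfl; exact hi hpA) 1
      have := (hle hmem).1 p hpB
      simp [Pi.single_eq_same] at this
    · have hpB : p ∈ B := by
        by_contra hpB
        exact hp ⟨fun h => absurd h hpA, fun h => absurd h hpB⟩
      have hmem : ((0 : Fin m → ℂ), Pi.single p (1:ℂ)) ∈ PiHatSub m A := by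
        refine ⟨fun i _ => rfl, fun j hj => ?_⟩
        exact Pi.single_eq_of_ne (by rintro rfl; exact hpA hj) 1
      have := (hle hmem).2 p hpB
      simp [Pi.single_eq_same] at this
end
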